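/- For every ground type γ there exists a constant k_γ such that for every type-γ value term graph v, the total number of vertices of v is at most k_γ · (1 + size(v)), where size(v) counts only the data-constructor vertices. -/

import Mathlib

/-!
Every vertex of a value is a data constructor or lies in a layer of non-constructor vertices:
either above the topmost constructors, or between a constructor of `μP` and the constructors
(or leaves) directly below it. A top layer of type `γ` has at most `γ.offset` vertices and a layer
below a constructor of `μP` at most `P.offset`, so charging each constructor of `μP` for the layer
below it costs `(μP).rate = 1 + P.offset + P.rate` vertices per constructor, where `P.rate` covers
constructors of the data types nested in `P` as constants.
-/

/-- Values (tree model of value term graphs). -/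
inductive Val : Type
  | unit : Val
  | pair : Val → Val → Val
  | inj : Bool → Val → Val
  | constr : Val → Val

mutual
/-- Ground types: unit, sums, products, and inductive data types μP. -/
inductive GTy : Type
  | unit : GTy
  | sum : GTy → GTy → GTy
  | prod : GTy → GTy → GTy
  | mu : PolyF → GTy

/-- Polynomial functors over ground types. -/
inductive PolyF : Type
  | id : PolyF
  | const : GTy → PolyF
  | sum : PolyF → PolyF → PolyF
  | prod : PolyF → PolyF → PolyF
end

mutual
/-- `HasTy v γ`: the value `v` is a type-`γ` value term graph. -/
inductive HasTy : Val → GTy → Prop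
  | unit : HasTy Val.unit GTy.unit
  | pair {v₁ v₂ γ₁ γ₂} : HasTy v₁ γ₁ → HasTy v₂ γ₂ →
      HasTy (Val.pair v₁ v₂) (GTy.prod γ₁ γ₂)
  | injl {v γ₁ γ₂} : HasTy v γ₁ → HasTy (Val.inj false v) (GTy.sum γ₁ γ₂)
  | injr {v γ₁ γ₂} : HasTy v γ₂ → HasTy (Val.inj true v) (GTy.sum γ₁ γ₂)
  | constr {v p} : HasTyP v p (GTy.mu p) → HasTy (Val.constr v) (GTy.mu p)

/-- `HasTyP v P δ`: the value `v` is a type-`P(δ)` value term graph. -/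
inductive HasTyP : Val → PolyF → GTy → Prop
  | id {v δ} : HasTy v δ → HasTyP v PolyF.id δ
  | const {v t δ} : HasTy v t → HasTyP v (PolyF.const t) δ
  | pair {v₁ v₂ p q δ} : HasTyP v₁ p δ → HasTyP v₂ q δ →
      HasTyP (Val.pair v₁ v₂) (PolyF.prod p q) δ
  | injl {v p q δ} : HasTyP v p δ → HasTyP (Val.inj false v) (PolyF.sum p q) δ
  | injr {v p q δ} : HasTyP v q δ → HasTyP (Val.inj true v) (PolyF.sum p q) δ
end

/-- Total number of vertices. -/
def totalVertices : Val → ℕ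
  | Val.unit => 1
  | Val.pair v₁ v₂ => 1 + totalVertices v₁ + totalVertices v₂
  | Val.inj _ v => 1 + totalVertices v
  | Val.constr v => 1 + totalVertices v

/-- Number of data-constructor vertices. -/
def size : Val → ℕ
  | Val.unit => 0
  | Val.pair v₁ v₂ => size v₁ + size v₂
  | Val.inj _ v => size v
  | Val.constr v => 1 + size v

mutual
def GTy.offset : GTy → ℕ
  | GTy.unit => 1
  | GTy.sum a b => 1 + a.offset + b.offset
  | GTy.prod a b => 1 + a.offset + b.offset
  | GTy.mu _ => 0

def PolyF.offset : PolyF → ℕ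
  | PolyF.id => 0
  | PolyF.const t => t.offset
  | PolyF.sum p q => 1 + p.offset + q.offset
  | PolyF.prod p q => 1 + p.offset + q.offset
end

mutual
def GTy.rate : GTy → ℕ
  | GTy.unit => 0
  | GTy.sum a b => a.rate + b.rate
  | GTy.prod a b => a.rate + b.rate
  | GTy.mu p => 1 + p.offset + p.rate

def PolyF.rate : PolyF → ℕ
  | PolyF.id => 0
  | PolyF.const t => t.rate
  | PolyF.sum p q => p.rate + q.rate
  | PolyF.prod p q => p.rate + q.rate
end

mutual
theorem totalVertices_le_of_hasTy :
    ∀ {v : Val} {γ : GTy}, HasTy v γ → totalVertices v ≤ γ.offset + γ.rate * size v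
  | _, _, .unit => by simp [totalVertices, GTy.offset]
  | _, _, .pair h₁ h₂ => by
    have ih₁ := totalVertices_le_of_hasTy h₁
    have ih₂ := totalVertices_le_of_hasTy h₂
    simp only [totalVertices, size, GTy.offset, GTy.rate]
    nlinarith
  | _, _, .injl h => by
    have ih := totalVertices_le_of_hasTy h
    simp only [totalVertices, size, GTy.offset, GTy.rate]
    nlinarith
  | _, _, .injr h => by
    have ih := totalVertices_le_of_hasTy h
    simp only [totalVertices, size, GTy.offset, GTy.rate]
    nlinarith
  | _, _, .constr (p := p) h => by
    have ih := totalVertices_le_of_hasTyP (m := (GTy.mu p).rate) h rfl le_rfl (by simp [GTy.rate])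
    simp only [totalVertices, size, GTy.offset, GTy.rate] at *
    nlinarith

/-- Recursive positions of a `P(δ)`-layer hold values of a data type `δ`, which start with a
constructor, hence `δ.offset = 0`; the rate `m` is free because the constructor case needs it to be
`(μP).rate` itself. -/
theorem totalVertices_le_of_hasTyP :
    ∀ {v : Val} {p : PolyF} {δ : GTy} {m : ℕ}, HasTyP v p δ → δ.offset = 0 → δ.rate ≤ m →
      p.rate ≤ m → totalVertices v ≤ p.offset + m * size v
  | _, _, _, _, .id h, hδ, hm, _ => by
    have ih := totalVertices_le_of_hasTy h
    simp only [PolyF.offset]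
    nlinarith
  | _, _, _, _, .const h, _, _, hp => by
    have ih := totalVertices_le_of_hasTy h
    simp only [PolyF.offset, PolyF.rate] at *
    nlinarith
  | _, _, _, _, .pair h₁ h₂, hδ, hm, hp => by
    simp only [PolyF.rate] at hp
    have ih₁ := totalVertices_le_of_hasTyP h₁ hδ hm (by omega)
    have ih₂ := totalVertices_le_of_hasTyP h₂ hδ hm (by omega)
    simp only [totalVertices, size, PolyF.offset]
    nlinarith
  | _, _, _, _, .injl h, hδ, hm, hp => by
    simp only [PolyF.rate] at hp
    have ih := totalVertices_le_of_hasTyP h hδ hm (by omega)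
    simp only [totalVertices, size, PolyF.offset]
    nlinarith
  | _, _, _, _, .injr h, hδ, hm, hp => by
    simp only [PolyF.rate] at hp
    have ih := totalVertices_le_of_hasTyP h hδ hm (by omega)
    simp only [totalVertices, size, PolyF.offset]
    nlinarith
end

theorem stmt_11 (γ : GTy) :
    ∃ k : ℕ, ∀ v : Val, HasTy v γ → totalVertices v ≤ k * (1 + size v) := by
  refine ⟨γ.offset + γ.rate, fun v hv => ?_⟩
  have hbound := totalVertices_le_of_hasTy hv
  nlinarith
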